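/- arXiv:2506.12163 — 2 statements merged into one kernel-verified Lean document; each statement's English description precedes it below -/
import Mathlib

section
/- Let g(r, d) = d/√r. There exist a constant C > 0 and a real number r* ≥ 1 such that for all real r ≥ r* and all real d with 1 ≤ d ≤ r, the drift expression G(r, d) := ((r + d − 4)/2)·(g(r+1, d+3) − g(r, d)) + ((r − d − 4)/2)·(g(r+1, d−3) − g(r, d)) satisfies |G(r, d) − (5/2)·d/√r| ≤ C · d / r^{3/2}. -/
open Real

/-!
Writing `s = √r` and `t = √(r+1)`, the drift is linear in `d` and the centred drift collapses to
`d · ((r-1)/t - (2r-3)/(2s))`. Since `(r-1)/√(r+1) = √r - 3/(2√r) + O(r^{-3/2})`, the bracket is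
`O(r^{-3/2})`; the explicit bounds `0 ≤ (r-1)/t - (2r-3)/(2s) ≤ 2/(r s)` follow by comparing squares,
the differences of squares being the polynomials `7r - 9` and `9r³ + r² - 8r + 16`.
-/

lemma drift_sub_eq (r d s t : ℝ) :
    ((r + d - 4)/2) * ((d + 3) / t - d / s) + ((r - d - 4)/2) * ((d - 3) / t - d / s)
      - (5/2) * d / s = d * ((r - 1) / t - (2 * r - 3) / (2 * s)) := by
  ring

lemma div_sqrt_succ_sub_div_sqrt_nonneg {r : ℝ} (hr : 1 ≤ r) :
    0 ≤ (r - 1) / √(r + 1) - (2 * r - 3) / (2 * √r) := by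
  have hs : √r ^ 2 = r := sq_sqrt (by linarith)
  have ht : √(r + 1) ^ 2 = r + 1 := sq_sqrt (by linarith)
  have hs0 : 0 < √r := sqrt_pos.2 (by linarith)
  have ht0 : 0 < √(r + 1) := sqrt_pos.2 (by linarith)
  rw [sub_nonneg, div_le_div_iff₀ (by positivity) ht0]
  rcases le_or_gt (2 * r - 3) 0 with h | h
  · nlinarith
  · have hsq : ((r - 1) * (2 * √r)) ^ 2 - ((2 * r - 3) * √(r + 1)) ^ 2 = 7 * r - 9 := by
      linear_combination (4 * (r - 1) ^ 2) * hs - (2 * r - 3) ^ 2 * ht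
    exact le_of_sq_le_sq (by linarith) (by positivity)

lemma div_sqrt_succ_sub_div_sqrt_le {r : ℝ} (hr : 0 < r) :
    (r - 1) / √(r + 1) - (2 * r - 3) / (2 * √r) ≤ 2 / (r * √r) := by
  have hs : √r ^ 2 = r := sq_sqrt hr.le
  have ht : √(r + 1) ^ 2 = r + 1 := sq_sqrt (by linarith)
  have hs0 : 0 < √r := sqrt_pos.2 hr
  have ht0 : 0 < √(r + 1) := sqrt_pos.2 (by linarith)
  have hp : 0 < 2 * r ^ 2 - 3 * r + 4 := by nlinarith
  have hsq : (√(r + 1) * (2 * r ^ 2 - 3 * r + 4)) ^ 2 - (2 * r * √r * (r - 1)) ^ 2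
      = 9 * r ^ 3 + r ^ 2 - 8 * r + 16 := by
    linear_combination (2 * r ^ 2 - 3 * r + 4) ^ 2 * ht - (4 * r ^ 2 * (r - 1) ^ 2) * hs
  have key : 2 * r * √r * (r - 1) ≤ √(r + 1) * (2 * r ^ 2 - 3 * r + 4) := by
    nlinarith [mul_pos ht0 hp, mul_pos hr hs0]
  have hsplit : 2 / (r * √r) + (2 * r - 3) / (2 * √r) = (2 * r ^ 2 - 3 * r + 4) / (2 * r * √r) := by
    field_simp
    ring
  rw [sub_le_iff_le_add, hsplit, div_le_div_iff₀ ht0 (by positivity)]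
  linarith

lemma rpow_three_halves {r : ℝ} (hr : 0 < r) : r ^ ((3 : ℝ) / 2) = r * √r := by
  rw [show (3 : ℝ) / 2 = 1 + 1 / 2 by norm_num, rpow_add hr, rpow_one, ← sqrt_eq_rpow]

/-- Drift estimate for the rescaled process `L_N = D/√R`: with
`g(r, d) = d/√r`, the drift
`G(r, d) = ((r+d−4)/2)(g(r+1, d+3) − g(r, d)) + ((r−d−4)/2)(g(r+1, d−3) − g(r, d))`
satisfies `|G(r, d) − (5/2) d/√r| ≤ C d / r^{3/2}` for `r ≥ r*` and `1 ≤ d ≤ r`. -/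
theorem drift_estimate :
    ∃ C : ℝ, 0 < C ∧ ∃ rstar : ℝ, 1 ≤ rstar ∧
      ∀ r : ℝ, rstar ≤ r → ∀ d : ℝ, 1 ≤ d → d ≤ r →
        |((r + d - 4)/2) * ((d + 3) / Real.sqrt (r + 1) - d / Real.sqrt r)
            + ((r - d - 4)/2) * ((d - 3) / Real.sqrt (r + 1) - d / Real.sqrt r)
            - (5/2) * d / Real.sqrt r| ≤ C * d / r ^ ((3 : ℝ)/2) := by
  refine ⟨2, two_pos, 1, le_rfl, fun r hr d hd _ => ?_⟩
  have hr0 : 0 < r := by linarith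
  rw [drift_sub_eq, rpow_three_halves hr0,
    abs_of_nonneg (mul_nonneg (by linarith) (div_sqrt_succ_sub_div_sqrt_nonneg hr))]
  calc d * ((r - 1) / √(r + 1) - (2 * r - 3) / (2 * √r)) ≤ d * (2 / (r * √r)) :=
        mul_le_mul_of_nonneg_left (div_sqrt_succ_sub_div_sqrt_le hr0) (by linarith)
    _ = 2 * d / (r * √r) := by ring
end

section
/- Let g(r, d) = d/√r. For every η > 0 and every ε > 0 there exists r₀ ≥ 1 such that for all real r ≥ r₀ and all real d with |d| ≤ η·√r, the quadratic-variation expression F(r, d) := ((r + d − 4)/2)·(g(r+1, d+3) − g(r, d))² + ((r − d − 4)/2)·(g(r+1, d−3) − g(r, d))² satisfies |F(r, d) − 9| ≤ ε. -/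
/-!
Write `s = √r` and `u = √(r+1) - √r`. Clearing denominators gives the exact identity
`F(r, d) - 9 = (-45 r + (r - 4) d² u² - 6 s d² u) / (r (r + 1))`. Since `u (√(r+1) + √r) = 1`
we have `s u ≤ 1/2`, so the numerator is `O(r + d²)`, and `|F(r, d) - 9| ≤ (45 + 4 η²) / r`
as soon as `d² ≤ η² r`.
-/

-- `normalizedDiff` is the paper's `g`, `quadVarIntegrand` its `F`.
noncomputable def normalizedDiff (r d : ℝ) : ℝ := d / √r

noncomputable def quadVarIntegrand (r d : ℝ) : ℝ :=
  ((r + d - 4) / 2) * (normalizedDiff (r + 1) (d + 3) - normalizedDiff r d) ^ 2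
    + ((r - d - 4) / 2) * (normalizedDiff (r + 1) (d - 3) - normalizedDiff r d) ^ 2

lemma sqrt_succ_sub_sqrt_pos {r : ℝ} (hr : 0 ≤ r) : 0 < √(r + 1) - √r :=
  sub_pos.2 (Real.sqrt_lt_sqrt hr (lt_add_one r))

lemma two_mul_sqrt_mul_sqrt_succ_sub_sqrt_le_one {r : ℝ} (hr : 0 ≤ r) :
    2 * √r * (√(r + 1) - √r) ≤ 1 := by
  have hu := (sqrt_succ_sub_sqrt_pos hr).le
  calc 2 * √r * (√(r + 1) - √r) = (√r + √r) * (√(r + 1) - √r) := by ring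
    _ ≤ (√(r + 1) + √r) * (√(r + 1) - √r) := by gcongr; linarith
    _ = 1 := by rw [← sq_sub_sq, Real.sq_sqrt (by linarith), Real.sq_sqrt hr]; ring

lemma quadVarIntegrand_sub_nine {r : ℝ} (hr : 0 < r) (d : ℝ) :
    quadVarIntegrand r d - 9 =
      (-45 * r + (r - 4) * d ^ 2 * (√(r + 1) - √r) ^ 2 - 6 * √r * d ^ 2 * (√(r + 1) - √r))
        / (r * (r + 1)) := by
  have hs : √r ^ 2 = r := Real.sq_sqrt hr.le
  have ht : √(r + 1) ^ 2 = r + 1 := Real.sq_sqrt (by linarith)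
  have hs0 : 0 < √r := Real.sqrt_pos.2 hr
  have ht0 : 0 < √(r + 1) := Real.sqrt_pos.2 (by linarith)
  unfold quadVarIntegrand normalizedDiff
  generalize √r = s at *
  generalize √(r + 1) = t at *
  subst hs
  -- with `r + 1` written as `t²`, the relation `t² = s² + 1` is needed only once, linearly
  rw [← ht]
  field_simp
  linear_combination (-18 * s ^ 2) * ht

lemma abs_quadVarIntegrand_sub_nine_le {r : ℝ} (hr : 1 ≤ r) (d : ℝ) :
    |quadVarIntegrand r d - 9| ≤ (45 * r + 4 * d ^ 2) / (r * (r + 1)) := by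
  have hr0 : 0 < r := by linarith
  rw [quadVarIntegrand_sub_nine hr0, abs_div, abs_of_pos (by positivity : 0 < r * (r + 1)),
    div_le_div_iff_of_pos_right (by positivity), abs_le]
  set s := √r
  set u := √(r + 1) - √r
  have hs : s ^ 2 = r := Real.sq_sqrt hr0.le
  have hs1 : 1 ≤ s := Real.one_le_sqrt.2 hr
  have hu : 0 < u := sqrt_succ_sub_sqrt_pos hr0.le
  have hsu : 2 * s * u ≤ 1 := two_mul_sqrt_mul_sqrt_succ_sub_sqrt_le_one hr0.le
  have hd : 0 ≤ d ^ 2 := sq_nonneg d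
  have hsu_d : 0 ≤ s * d ^ 2 * u := by positivity
  have hsu_d' : s * d ^ 2 * u ≤ d ^ 2 / 2 := by nlinarith
  have hsu_sq : r * d ^ 2 * u ^ 2 ≤ d ^ 2 / 4 := by
    have : (s * u) ^ 2 ≤ (1 / 2) ^ 2 := pow_le_pow_left₀ (by positivity) (by linarith) 2
    rw [← hs]; nlinarith
  have hu_sq : d ^ 2 * u ^ 2 ≤ d ^ 2 / 4 := by
    have : u ^ 2 ≤ (1 / 2) ^ 2 := pow_le_pow_left₀ hu.le (by nlinarith) 2
    nlinarith
  constructor <;> nlinarith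

lemma abs_quadVarIntegrand_sub_nine_le_of_sq_le {r c d : ℝ} (hr : 1 ≤ r) (hd : d ^ 2 ≤ c * r) :
    |quadVarIntegrand r d - 9| ≤ (45 + 4 * c) / r := by
  have hr0 : 0 < r := by linarith
  calc |quadVarIntegrand r d - 9| ≤ (45 * r + 4 * d ^ 2) / (r * (r + 1)) :=
        abs_quadVarIntegrand_sub_nine_le hr d
    _ ≤ (45 + 4 * c) * r / (r * r) := by
        gcongr
        · nlinarith [sq_nonneg d]
        · linarith
        · linarith
    _ = (45 + 4 * c) / r := by field_simp

theorem quadratic_variation_estimate_general (η ε : ℝ) (hε : 0 < ε) :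
    ∃ r₀ : ℝ, 1 ≤ r₀ ∧
      ∀ r : ℝ, r₀ ≤ r → ∀ d : ℝ, |d| ≤ η * Real.sqrt r →
        |((r + d - 4)/2) * ((d + 3) / Real.sqrt (r + 1) - d / Real.sqrt r) ^ 2
            + ((r - d - 4)/2) * ((d - 3) / Real.sqrt (r + 1) - d / Real.sqrt r) ^ 2
            - 9| ≤ ε := by
  refine ⟨max 1 ((45 + 4 * η ^ 2) / ε), le_max_left _ _, fun r hr d hd => ?_⟩
  have hr1 : 1 ≤ r := (le_max_left _ _).trans hr
  have hd2 : d ^ 2 ≤ η ^ 2 * r := by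
    calc d ^ 2 = |d| ^ 2 := (sq_abs d).symm
      _ ≤ (η * √r) ^ 2 := pow_le_pow_left₀ (abs_nonneg d) hd 2
      _ = η ^ 2 * r := by rw [mul_pow, Real.sq_sqrt (by linarith)]
  calc |quadVarIntegrand r d - 9| ≤ (45 + 4 * η ^ 2) / r :=
        abs_quadVarIntegrand_sub_nine_le_of_sq_le hr1 hd2
    _ ≤ ε := by
        rw [div_le_iff₀ (by linarith), mul_comm ε r]
        exact (div_le_iff₀ hε).1 ((le_max_right _ _).trans hr)

/-- Quadratic-variation estimate for the martingale part of `L_N = D/√R`: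
with `g(r, d) = d/√r`, the expression
`F(r, d) = ((r+d−4)/2)(g(r+1, d+3) − g(r, d))² + ((r−d−4)/2)(g(r+1, d−3) − g(r, d))²`
satisfies `|F(r, d) − 9| ≤ ε` for all `r` large enough and `|d| ≤ η √r`. -/
theorem quadratic_variation_estimate (η ε : ℝ) (hη : 0 < η) (hε : 0 < ε) :
    ∃ r₀ : ℝ, 1 ≤ r₀ ∧
      ∀ r : ℝ, r₀ ≤ r → ∀ d : ℝ, |d| ≤ η * Real.sqrt r →
        |((r + d - 4)/2) * ((d + 3) / Real.sqrt (r + 1) - d / Real.sqrt r) ^ 2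
            + ((r - d - 4)/2) * ((d - 3) / Real.sqrt (r + 1) - d / Real.sqrt r) ^ 2
            - 9| ≤ ε :=
  quadratic_variation_estimate_general η ε hε
end
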